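/- Let F : Sⁿ → ℝ be orthogonally invariant and twice continuously differentiable at A ∈ Sⁿ. Then for every B ∈ Sⁿ and every skew-symmetric matrix W, ⟨∇²F(A)[B], [W, A]⟩ = ⟨B, [W, ∇F(A)]⟩, where [W, A] = WA − AW. -/

import Mathlib

open Matrix

/-- Frobenius norm of a matrix. -/
noncomputable def fnorm {n : ℕ} (B : Matrix (Fin n) (Fin n) ℝ) : ℝ :=
  Real.sqrt ((Bᵀ * B).trace)

/-- `G` is the gradient, with respect to the trace inner product on the space of
symmetric matrices, of `F : Sⁿ → ℝ` at the symmetric matrix `X`: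
`F(X + B) = F(X) + ⟨G, B⟩ + o(‖B‖)` over symmetric perturbations `B`,
with `G` symmetric. -/
def HasSpecGradientAt {n : ℕ} (F : Matrix (Fin n) (Fin n) ℝ → ℝ)
    (X G : Matrix (Fin n) (Fin n) ℝ) : Prop :=
  G.IsHermitian ∧ ∀ ε : ℝ, 0 < ε → ∃ δ : ℝ, 0 < δ ∧
    ∀ B : Matrix (Fin n) (Fin n) ℝ, B.IsHermitian → fnorm B ≤ δ →
      |F (X + B) - F X - (G * B).trace| ≤ ε * fnorm B

/-!
Extending `F` to all matrices as `F ∘ symPart`, with `symPart X = (X + Xᵀ) / 2`, turns the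
hypotheses, which only control symmetric perturbations, into genuine Fréchet derivatives: the
derivative of `F ∘ symPart` at `Y` is `V ↦ tr (G (symPart Y) * V)`, and that of `G ∘ symPart` at
`A` is `H ∘ symPart`. Schwarz's theorem then makes `(B, C) ↦ tr (H B * C)` symmetric on symmetric
matrices. Invariance of `F` forces `G (U X Uᵀ) = U (G X) Uᵀ`; differentiating this along the
orthogonal curve `t ↦ exp (t W)` at `A` gives `H [W, A] = [W, G A]`. Hence
`tr (H B [W, A]) = tr (H [W, A] B) = tr ([W, G A] B)`.
-/

attribute [local instance] Matrix.frobeniusNormedRing Matrix.frobeniusNormedAlgebra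

namespace SymmetricMatrix

section Symmetrization

variable {ι : Type*} [Fintype ι]

noncomputable def symPart : Matrix ι ι ℝ →L[ℝ] Matrix ι ι ℝ :=
  LinearMap.toContinuousLinearMap
    ((2⁻¹ : ℝ) • (LinearMap.id + (transposeLinearEquiv ι ι ℝ ℝ).toLinearMap))

lemma symPart_apply (X : Matrix ι ι ℝ) : symPart X = (2⁻¹ : ℝ) • (X + Xᵀ) := rfl

lemma isHermitian_symPart (X : Matrix ι ι ℝ) : (symPart X).IsHermitian := by
  rw [isHermitian_iff_isSymm, IsSymm, symPart_apply, transpose_smul, transpose_add,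
    transpose_transpose, add_comm]

lemma symPart_eq_self {X : Matrix ι ι ℝ} (hX : X.IsHermitian) : symPart X = X := by
  rw [symPart_apply, (isHermitian_iff_isSymm.mp hX).eq, ← two_smul ℝ X, smul_smul,
    inv_mul_cancel₀ two_ne_zero, one_smul]

lemma symPart_conj (U X : Matrix ι ι ℝ) : symPart (U * X * Uᵀ) = U * symPart X * Uᵀ := by
  simp only [symPart_apply, transpose_mul, transpose_transpose, Matrix.mul_smul,
    Matrix.smul_mul, Matrix.mul_add, Matrix.add_mul, Matrix.mul_assoc]

lemma isHermitian_commutator {A W : Matrix ι ι ℝ}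
    (hA : A.IsHermitian) (hW : Wᵀ = -W) : (W * A - A * W).IsHermitian := by
  rw [isHermitian_iff_isSymm, IsSymm, transpose_sub, transpose_mul, transpose_mul, hW,
    (isHermitian_iff_isSymm.mp hA).eq, Matrix.mul_neg, Matrix.neg_mul, sub_neg_eq_add,
    neg_add_eq_sub]

end Symmetrization

section Frobenius

variable {ι : Type*} [Fintype ι] [DecidableEq ι]

open NormedSpace

lemma norm_symPart_le (X : Matrix ι ι ℝ) : ‖symPart X‖ ≤ ‖X‖ := by
  rw [symPart_apply, norm_smul]
  calc ‖(2⁻¹ : ℝ)‖ * ‖X + Xᵀ‖ ≤ 2⁻¹ * (‖X‖ + ‖Xᵀ‖) := by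
        rw [Real.norm_of_nonneg (by norm_num)]; gcongr; exact norm_add_le _ _
    _ = ‖X‖ := by rw [frobenius_norm_transpose]; ring

def HasFDerivAtAlongSymm {E : Type*} [NormedAddCommGroup E] [NormedSpace ℝ E]
    (φ : Matrix ι ι ℝ → E) (L : Matrix ι ι ℝ →L[ℝ] E) (X : Matrix ι ι ℝ) : Prop :=
  ∀ ε : ℝ, 0 < ε → ∃ δ : ℝ, 0 < δ ∧ ∀ B : Matrix ι ι ℝ, B.IsHermitian → ‖B‖ ≤ δ →
    ‖φ (X + B) - φ X - L B‖ ≤ ε * ‖B‖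

lemma HasFDerivAtAlongSymm.hasFDerivAt_comp_symPart {E : Type*} [NormedAddCommGroup E]
    [NormedSpace ℝ E] {φ : Matrix ι ι ℝ → E} {L : Matrix ι ι ℝ →L[ℝ] E} {Y : Matrix ι ι ℝ}
    (h : HasFDerivAtAlongSymm φ L (symPart Y)) : HasFDerivAt (φ ∘ symPart) (L.comp symPart) Y := by
  refine hasFDerivAt_iff_isLittleO_nhds_zero.mpr (Asymptotics.isLittleO_iff.mpr fun ε hε => ?_)
  obtain ⟨δ, hδ, hφ⟩ := h ε hε
  filter_upwards [Metric.closedBall_mem_nhds (0 : Matrix ι ι ℝ) hδ] with B hB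
  rw [mem_closedBall_zero_iff] at hB
  simp only [Function.comp_apply, map_add]
  exact (hφ _ (isHermitian_symPart B) ((norm_symPart_le B).trans hB)).trans
    (mul_le_mul_of_nonneg_left (norm_symPart_le B) hε.le)

noncomputable def traceForm : Matrix ι ι ℝ →L[ℝ] Matrix ι ι ℝ →L[ℝ] ℝ :=
  (ContinuousLinearMap.compL ℝ _ _ ℝ
    (LinearMap.toContinuousLinearMap (traceLinearMap ι ℝ ℝ))).comp
    (ContinuousLinearMap.mul ℝ _)

lemma traceForm_apply (X Y : Matrix ι ι ℝ) : traceForm X Y = (X * Y).trace := rfl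

lemma traceForm_comp_symPart {X : Matrix ι ι ℝ} (hX : X.IsHermitian) :
    (traceForm X).comp symPart = traceForm X := by
  ext1 Y
  have hXY : (X * Yᵀ).trace = (X * Y).trace := by
    rw [← trace_transpose, transpose_mul, transpose_transpose, (isHermitian_iff_isSymm.mp hX).eq,
      trace_mul_comm]
  rw [ContinuousLinearMap.comp_apply, traceForm_apply, traceForm_apply, symPart_apply,
    Matrix.mul_smul, trace_smul, Matrix.mul_add, trace_add, hXY, smul_eq_mul]
  ring

lemma hasDerivAt_exp_smul_conj (W X : Matrix ι ι ℝ) :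
    HasDerivAt (fun t : ℝ => exp (t • W) * X * (exp (t • W))ᵀ) (W * X + X * Wᵀ) 0 := by
  have hexp : ∀ V : Matrix ι ι ℝ, HasDerivAt (fun t : ℝ => exp (t • V)) V 0 := fun V => by
    have h := hasDerivAt_exp_smul_const (𝕂 := ℝ) V 0
    rwa [zero_smul, exp_zero, one_mul] at h
  have hprod := ((hexp W).mul_const X).mul (hexp Wᵀ)
  simp only [zero_smul, exp_zero, one_mul, mul_one] at hprod
  have hfun : (fun t : ℝ => exp (t • W) * X * (exp (t • W))ᵀ)
      = fun t => exp (t • W) * X * exp (t • Wᵀ) := by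
    funext t; rw [← exp_transpose, transpose_smul]
  rw [hfun]
  exact hprod

lemma exp_smul_mul_transpose {W : Matrix ι ι ℝ} (hW : Wᵀ = -W) (t : ℝ) :
    exp (t • W) * (exp (t • W))ᵀ = 1 := by
  have hskew : t • W ∈ skewAdjoint (Matrix ι ι ℝ) := by
    rw [skewAdjoint.mem_iff, star_eq_conjTranspose, conjTranspose_eq_transpose_of_trivial,
      transpose_smul, hW, smul_neg]
  have := Unitary.mul_star_self_of_mem (exp_mem_unitary_of_mem_skewAdjoint hskew)
  rwa [star_eq_conjTranspose, conjTranspose_eq_transpose_of_trivial] at this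

end Frobenius

section InvariantFunction

variable {n : ℕ}

open NormedSpace

lemma fnorm_eq_norm (B : Matrix (Fin n) (Fin n) ℝ) : fnorm B = ‖B‖ := by
  rw [fnorm, frobenius_norm_def, Real.sqrt_eq_rpow]
  simp only [trace, diag, mul_apply, transpose_apply, Real.norm_eq_abs, Real.rpow_two, sq,
    abs_mul_abs_self]
  rw [Finset.sum_comm]

lemma _root_.HasSpecGradientAt.hasFDerivAt_comp_symPart {F : Matrix (Fin n) (Fin n) ℝ → ℝ}
    {Y g : Matrix (Fin n) (Fin n) ℝ} (h : HasSpecGradientAt F (symPart Y) g) :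
    HasFDerivAt (F ∘ symPart) (traceForm g) Y := by
  obtain ⟨hg, hF⟩ := h
  rw [← traceForm_comp_symPart hg]
  refine HasFDerivAtAlongSymm.hasFDerivAt_comp_symPart fun ε hε => ?_
  obtain ⟨δ, hδ, hF⟩ := hF ε hε
  refine ⟨δ, hδ, fun B hB hBδ => ?_⟩
  rw [← fnorm_eq_norm] at hBδ ⊢
  simpa only [traceForm_apply, Real.norm_eq_abs] using hF B hB hBδ

lemma hessian_symm {F : Matrix (Fin n) (Fin n) ℝ → ℝ}
    {G : Matrix (Fin n) (Fin n) ℝ → Matrix (Fin n) (Fin n) ℝ}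
    {H : Matrix (Fin n) (Fin n) ℝ →L[ℝ] Matrix (Fin n) (Fin n) ℝ} {A : Matrix (Fin n) (Fin n) ℝ}
    (hA : A.IsHermitian) (hG : ∀ X, X.IsHermitian → HasSpecGradientAt F X (G X))
    (hH : HasFDerivAtAlongSymm G H A) {B C : Matrix (Fin n) (Fin n) ℝ} (hB : B.IsHermitian)
    (hC : C.IsHermitian) : (H B * C).trace = (H C * B).trace := by
  rw [← symPart_eq_self hA] at hH
  -- Instance search does not see through the Frobenius structure to the operator norm here.
  let _ : NormedAddCommGroup (Matrix (Fin n) (Fin n) ℝ →L[ℝ] ℝ) :=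
    ContinuousLinearMap.toNormedAddCommGroup
  let _ : NormedSpace ℝ (Matrix (Fin n) (Fin n) ℝ →L[ℝ] ℝ) := ContinuousLinearMap.toNormedSpace
  have hG' : HasFDerivAt (fun Y => traceForm (G (symPart Y))) (traceForm.comp (H.comp symPart)) A :=
    traceForm.hasFDerivAt.comp A hH.hasFDerivAt_comp_symPart
  have hschwarz := second_derivative_symmetric
    (fun Y => (hG _ (isHermitian_symPart Y)).hasFDerivAt_comp_symPart) hG' B C
  change traceForm (H (symPart B)) C = traceForm (H (symPart C)) B at hschwarz
  rwa [traceForm_apply, traceForm_apply, symPart_eq_self hB, symPart_eq_self hC] at hschwarz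

lemma gradient_orthogonal_conj {F : Matrix (Fin n) (Fin n) ℝ → ℝ}
    {G : Matrix (Fin n) (Fin n) ℝ → Matrix (Fin n) (Fin n) ℝ}
    (hinv : ∀ U X : Matrix (Fin n) (Fin n) ℝ, U * Uᵀ = 1 → X.IsHermitian → F (U * X * Uᵀ) = F X)
    (hG : ∀ X, X.IsHermitian → HasSpecGradientAt F X (G X)) {U X : Matrix (Fin n) (Fin n) ℝ}
    (hU : U * Uᵀ = 1) (hX : X.IsHermitian) : G (U * X * Uᵀ) = U * G X * Uᵀ := by
  set conj := ContinuousLinearMap.mulLeftRight ℝ (Matrix (Fin n) (Fin n) ℝ) U Uᵀ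
  have hUXU : (U * X * Uᵀ).IsHermitian := by
    simpa only [conjTranspose_eq_transpose_of_trivial] using isHermitian_mul_mul_conjTranspose U hX
  have hFconj : (F ∘ symPart) ∘ conj = F ∘ symPart := funext fun Y => by
    simp only [Function.comp_apply, conj, ContinuousLinearMap.mulLeftRight_apply, symPart_conj,
      hinv U _ hU (isHermitian_symPart Y)]
  have h₁ := (hG _ (isHermitian_symPart (U * X * Uᵀ))).hasFDerivAt_comp_symPart.comp X conj.hasFDerivAt
  rw [hFconj] at h₁
  have hderiv := (hG _ (isHermitian_symPart X)).hasFDerivAt_comp_symPart.unique h₁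
  rw [symPart_eq_self hX, symPart_eq_self hUXU] at hderiv
  have hGX : G X = Uᵀ * G (U * X * Uᵀ) * U := ext_iff_trace_mul_right.mpr fun V => by
    have := DFunLike.congr_fun hderiv V
    change traceForm (G X) V = traceForm (G (U * X * Uᵀ)) (U * V * Uᵀ) at this
    rw [traceForm_apply, traceForm_apply] at this
    rw [this]
    simp only [Matrix.mul_assoc]
    rw [trace_mul_comm Uᵀ]
    simp only [Matrix.mul_assoc]
  calc G (U * X * Uᵀ) = U * Uᵀ * G (U * X * Uᵀ) * (U * Uᵀ) := by
        rw [hU, Matrix.one_mul, Matrix.mul_one]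
    _ = U * G X * Uᵀ := by rw [hGX]; simp only [Matrix.mul_assoc]

lemma hessian_commutator {F : Matrix (Fin n) (Fin n) ℝ → ℝ}
    {G : Matrix (Fin n) (Fin n) ℝ → Matrix (Fin n) (Fin n) ℝ}
    {H : Matrix (Fin n) (Fin n) ℝ →L[ℝ] Matrix (Fin n) (Fin n) ℝ} {A W : Matrix (Fin n) (Fin n) ℝ}
    (hA : A.IsHermitian)
    (hinv : ∀ U X : Matrix (Fin n) (Fin n) ℝ, U * Uᵀ = 1 → X.IsHermitian → F (U * X * Uᵀ) = F X)
    (hG : ∀ X, X.IsHermitian → HasSpecGradientAt F X (G X)) (hH : HasFDerivAtAlongSymm G H A)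
    (hW : Wᵀ = -W) : H (W * A - A * W) = W * G A - G A * W := by
  have hconj : ∀ X : Matrix (Fin n) (Fin n) ℝ,
      HasDerivAt (fun t : ℝ => exp (t • W) * X * (exp (t • W))ᵀ) (W * X - X * W) 0 := fun X => by
    simpa only [hW, Matrix.mul_neg, ← sub_eq_add_neg] using hasDerivAt_exp_smul_conj W X
  set γ := fun t : ℝ => exp (t • W) * A * (exp (t • W))ᵀ
  have hγ : ∀ t, (γ t).IsHermitian := fun t => by
    simpa only [conjTranspose_eq_transpose_of_trivial] using
      isHermitian_mul_mul_conjTranspose (exp (t • W)) hA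
  have hγ0 : γ 0 = A := by simp only [γ, zero_smul, exp_zero, transpose_one, Matrix.mul_one,
    Matrix.one_mul]
  have hGγ : (G ∘ symPart) ∘ γ = fun t => exp (t • W) * G A * (exp (t • W))ᵀ := funext fun t => by
    simp only [Function.comp_apply, symPart_eq_self (hγ t), γ,
      gradient_orthogonal_conj hinv hG (exp_smul_mul_transpose hW t) hA]
  rw [← symPart_eq_self hA] at hH
  have hdiff := hH.hasFDerivAt_comp_symPart.comp_hasDerivAt_of_eq 0 (hconj A) hγ0.symm
  change HasDerivAt ((G ∘ symPart) ∘ γ) (H (symPart (W * A - A * W))) 0 at hdiff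
  rw [hGγ, symPart_eq_self (isHermitian_commutator hA hW)] at hdiff
  exact hdiff.unique (hconj (G A))

end InvariantFunction

end SymmetricMatrix

theorem statement16 {n : ℕ} (F : Matrix (Fin n) (Fin n) ℝ → ℝ)
    (G : Matrix (Fin n) (Fin n) ℝ → Matrix (Fin n) (Fin n) ℝ)
    (H : Matrix (Fin n) (Fin n) ℝ →ₗ[ℝ] Matrix (Fin n) (Fin n) ℝ)
    (A : Matrix (Fin n) (Fin n) ℝ) (hA : A.IsHermitian)
    (hinv : ∀ U X : Matrix (Fin n) (Fin n) ℝ, U * Uᵀ = 1 → X.IsHermitian →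
      F (U * X * Uᵀ) = F X)
    (hG : ∀ X : Matrix (Fin n) (Fin n) ℝ, X.IsHermitian → HasSpecGradientAt F X (G X))
    (hH : ∀ ε : ℝ, 0 < ε → ∃ δ : ℝ, 0 < δ ∧
      ∀ B : Matrix (Fin n) (Fin n) ℝ, B.IsHermitian → fnorm B ≤ δ →
        fnorm (G (A + B) - G A - H B) ≤ ε * fnorm B) :
    ∀ (B W : Matrix (Fin n) (Fin n) ℝ), B.IsHermitian → Wᵀ = -W →
      (H B * (W * A - A * W)).trace = (B * (W * G A - G A * W)).trace := by
  open SymmetricMatrix in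
  intro B W hB hW
  have hH' : HasFDerivAtAlongSymm G (LinearMap.toContinuousLinearMap H) A := fun ε hε => by
    simpa only [fnorm_eq_norm, LinearMap.coe_toContinuousLinearMap'] using hH ε hε
  have hsymm : (H B * (W * A - A * W)).trace = (H (W * A - A * W) * B).trace :=
    hessian_symm hA hG hH' hB (isHermitian_commutator hA hW)
  have hcomm : H (W * A - A * W) = W * G A - G A * W := hessian_commutator hA hinv hG hH' hW
  rw [hsymm, hcomm, trace_mul_comm]
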